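/- Define the maps φ, f₁, f₃ : ℂ³ → ℂ³ by φ(x,y,z) = (x², (y+z)², (y−z)²), f₁(x,y,z) = (2ix(y+z), x² + (y−z)², −4yz) and f₃(x,y,z) = (−4xy, (x−y+2z)², (x+y)²). Then φ ∘ f₁ = f₃ ∘ φ, i.e., for all (x,y,z) ∈ ℂ³ the two sides agree coordinatewise. (All three maps are given by homogeneous quadratic polynomials, so this identity expresses that the Lattès map on ℙ² induced by f₃ is semi-conjugate via the degree-2 map induced by φ to the Ueda map induced by f₁.) -/

import Mathlib

open Complex

noncomputable section

/-- `φ(x,y,z) = (x², (y+z)², (y−z)²)`. -/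
def phi : ℂ × ℂ × ℂ → ℂ × ℂ × ℂ :=
  fun p => (p.1 ^ 2, (p.2.1 + p.2.2) ^ 2, (p.2.1 - p.2.2) ^ 2)

/-- `f₁(x,y,z) = (2ix(y+z), x² + (y−z)², −4yz)`. -/
def f₁ : ℂ × ℂ × ℂ → ℂ × ℂ × ℂ :=
  fun p => (2 * I * p.1 * (p.2.1 + p.2.2), p.1 ^ 2 + (p.2.1 - p.2.2) ^ 2, -4 * p.2.1 * p.2.2)

/-- `f₃(x,y,z) = (−4xy, (x−y+2z)², (x+y)²)`. -/
def f₃ : ℂ × ℂ × ℂ → ℂ × ℂ × ℂ :=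
  fun p => (-4 * p.1 * p.2.1, (p.1 - p.2.1 + 2 * p.2.2) ^ 2, (p.1 + p.2.1) ^ 2)

theorem stmt16 : phi ∘ f₁ = f₃ ∘ phi := by
  funext ⟨x, y, z⟩
  simp only [Function.comp_apply, phi, f₁, f₃, Prod.mk.injEq]
  exact ⟨by linear_combination 4 * x ^ 2 * (y + z) ^ 2 * I_sq, by ring, by ring⟩
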